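/- arXiv:2307.12047 — 6 statements merged into one kernel-verified Lean document; each statement's English description precedes it below -/
import Mathlib

section
/- Let N ≥ 1 and let q be an integer, and set L = gcd(2N, 2q+1), Ñ = 2N/L and q̃ = (2q+1)/L. Assume L > 1 and let p be a prime dividing Ñ. Let n ∈ ℤ^N and define the folded coefficients y_l = Σ_{0 ≤ k < N, k ≡ l (mod Ñ)} n_k for 0 ≤ l < Ñ. If y_l = y_{l mod (Ñ/p)} for all 0 ≤ l < Ñ, then Σ_{j=0}^{N-1} n_j · exp(-iπ (2q+1) j / N) = 0. -/
/-!
Write `ω = exp(-iπ(2q+1)/N) = exp(2πi r)` with `r = -(2q+1)/(2N)`; the reduced denominator of `r`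
is `Ñ = 2N/L`, so `ω` is a primitive `Ñ`-th root of unity. As `ω ^ Ñ = 1`, the sum
`∑ n_j ω^j` equals the folded sum `∑_{l < Ñ} y_l ω^l`. Cutting `[0, Ñ)` into `p` blocks of length
`m = Ñ/p`, the periodicity of `y` factors this as `(∑_{a < m} y_a ω^a) · ∑_{b < p} (ω^m)^b`, and the
second factor is the geometric sum of the primitive `p`-th root of unity `ω^m`, which vanishes.
-/

/-- Extension of a vector indexed by `Fin N` to all of `ℕ`, by zero. -/
def pad {N : ℕ} {α : Type*} [Zero α] (n : Fin N → α) : ℕ → α :=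
  fun k => if h : k < N then n ⟨k, h⟩ else 0

open Finset Complex Real

theorem Finset.sum_range_mul_eq_sum_sum {M : Type*} [AddCommMonoid M] (f : ℕ → M) (m p : ℕ) :
    ∑ l ∈ range (m * p), f l = ∑ b ∈ range p, ∑ a ∈ range m, f (m * b + a) := by
  induction p with
  | zero => simp
  | succ p ih => rw [Nat.mul_succ, sum_range_add, ih, sum_range_succ]

theorem sum_mul_pow_eq_sum_mod_of_pow_eq_one {R : Type*} [CommSemiring R] {ζ : R} {M : ℕ}
    (hM : 0 < M) (hζ : ζ ^ M = 1) (s : Finset ℕ) (f : ℕ → R) :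
    ∑ k ∈ s, f k * ζ ^ k = ∑ l ∈ range M, (∑ k ∈ s with k % M = l, f k) * ζ ^ l := by
  rw [← sum_fiberwise_of_maps_to (t := range M) (g := (· % M))
    (fun k _ => mem_range.2 (Nat.mod_lt k hM))]
  refine sum_congr rfl fun l _ => ?_
  rw [sum_mul]
  refine sum_congr rfl fun k hk => ?_
  rw [pow_eq_pow_mod k hζ, (mem_filter.1 hk).2]

theorem IsPrimitiveRoot.sum_mul_pow_eq_zero_of_periodic {R : Type*} [CommRing R] [IsDomain R]
    {ζ : R} {M p : ℕ} (hζ : IsPrimitiveRoot ζ M) (hp : 1 < p) (hpM : p ∣ M) (y : ℕ → R)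
    (hy : ∀ l < M, y l = y (l % (M / p))) :
    ∑ l ∈ range M, y l * ζ ^ l = 0 := by
  obtain ⟨m, rfl⟩ := hpM
  rcases Nat.eq_zero_or_pos m with rfl | hm
  · simp
  rw [Nat.mul_div_cancel_left m (by omega)] at hy
  have hζm : IsPrimitiveRoot (ζ ^ m) p := hζ.pow (by positivity) (mul_comm p m)
  have hblock : ∀ b < p, ∀ a < m, y (m * b + a) = y a := fun b hb a ha => by
    rw [hy _ (by nlinarith), Nat.mul_add_mod, Nat.mod_eq_of_lt ha]
  calc ∑ l ∈ range (p * m), y l * ζ ^ l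
      = ∑ b ∈ range p, ∑ a ∈ range m, y (m * b + a) * ζ ^ (m * b + a) := by
        rw [mul_comm p m, sum_range_mul_eq_sum_sum]
    _ = (∑ a ∈ range m, y a * ζ ^ a) * ∑ b ∈ range p, (ζ ^ m) ^ b := by
        rw [mul_sum]
        refine sum_congr rfl fun b hb => ?_
        rw [sum_mul]
        refine sum_congr rfl fun a ha => ?_
        rw [hblock b (mem_range.1 hb) a (mem_range.1 ha), pow_add, pow_mul]
        ring
    _ = 0 := by rw [hζm.geom_sum_eq_zero hp, mul_zero]

theorem isPrimitiveRoot_exp_neg_pi_mul_I_int_div {N : ℕ} (hN : N ≠ 0) (a : ℤ) :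
    IsPrimitiveRoot (exp (-(π * I * a) / N)) (2 * N / Int.gcd (2 * N) a) := by
  convert isPrimitiveRoot_exp_rat (Rat.divInt (-a) (2 * N)) using 1
  · rw [Rat.divInt_eq_div]
    push_cast
    field_simp
  · rw [Rat.den_divInt, if_neg (by omega), Int.gcd_neg, Int.natAbs_mul]
    simp

theorem negacyclic_folded_solution_general (N : ℕ) (q : ℤ)
    (L : ℕ) (hL : L = Int.gcd (2 * (N : ℤ)) (2 * q + 1))
    (Ntil : ℕ) (hNtil : Ntil = 2 * N / L)
    (p : ℕ) (hp : p.Prime) (hpd : p ∣ Ntil)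
    (n : Fin N → ℤ)
    (y : ℕ → ℤ) (hy : ∀ l, y l = ∑ k ∈ Finset.range N, if k % Ntil = l then pad n k else 0)
    (h : ∀ l < Ntil, y l = y (l % (Ntil / p))) :
    ∑ j : Fin N, (n j : ℂ) *
      Complex.exp (-((Real.pi : ℂ) * Complex.I * ((2 * q + 1 : ℤ) : ℂ) * ((j : ℕ) : ℂ)) / (N : ℂ))
      = 0 := by
  rcases Nat.eq_zero_or_pos N with rfl | hN
  · simp
  have hNtil0 : 0 < Ntil := by
    have hLdvd : L ∣ 2 * N := by
      rw [hL]
      exact_mod_cast Int.gcd_dvd_left (2 * (N : ℤ)) (2 * q + 1)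
    rw [hNtil]
    exact Nat.div_pos (Nat.le_of_dvd (by omega) hLdvd) (Nat.pos_of_dvd_of_pos hLdvd (by omega))
  set ω := exp (-(π * I * ((2 * q + 1 : ℤ) : ℂ)) / N)
  have hω : IsPrimitiveRoot ω Ntil := by
    rw [hNtil, hL]
    exact isPrimitiveRoot_exp_neg_pi_mul_I_int_div hN.ne' _
  have hterm : ∀ j : ℕ, exp (-(π * I * ((2 * q + 1 : ℤ) : ℂ) * j) / N) = ω ^ j := fun j => by
    rw [← Complex.exp_nat_mul]
    ring_nf
  calc _ = ∑ k ∈ range N, ((pad n k : ℤ) : ℂ) * ω ^ k := by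
        rw [← Fin.sum_univ_eq_sum_range (fun k => ((pad n k : ℤ) : ℂ) * ω ^ k)]
        refine Fintype.sum_congr _ _ fun j => ?_
        rw [hterm]
        simp [pad]
    _ = ∑ l ∈ range Ntil, (y l : ℂ) * ω ^ l := by
        rw [sum_mul_pow_eq_sum_mod_of_pow_eq_one hNtil0 hω.pow_eq_one]
        refine sum_congr rfl fun l _ => ?_
        push_cast [hy, sum_filter]
        rfl
    _ = 0 := hω.sum_mul_pow_eq_zero_of_periodic hp.one_lt hpd _ fun l hl => by rw [h l hl]

theorem negacyclic_folded_solution (N : ℕ) (hN : 1 ≤ N) (q : ℤ)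
    (L : ℕ) (hL : L = Int.gcd (2 * (N : ℤ)) (2 * q + 1)) (hL1 : 1 < L)
    (Ntil : ℕ) (hNtil : Ntil = 2 * N / L)
    (p : ℕ) (hp : p.Prime) (hpd : p ∣ Ntil)
    (n : Fin N → ℤ)
    (y : ℕ → ℤ) (hy : ∀ l, y l = ∑ k ∈ Finset.range N, if k % Ntil = l then pad n k else 0)
    (h : ∀ l < Ntil, y l = y (l % (Ntil / p))) :
    ∑ j : Fin N, (n j : ℂ) *
      Complex.exp (-((Real.pi : ℂ) * Complex.I * ((2 * q + 1 : ℤ) : ℂ) * ((j : ℕ) : ℂ)) / (N : ℂ))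
      = 0 :=
  negacyclic_folded_solution_general N q L hL Ntil hNtil p hp hpd n y hy h
end

section
/- Let N ≥ 1. The set S = { n ∈ ℤ^N : Σ_{p=0}^{N-1} n_p · exp(-iπ p / N) = 0 } is a ℤ-submodule of ℤ^N that is free of rank N - φ(2N), where φ is Euler's totient function. -/
/-!
With `ζ = exp (-iπ / N)`, a primitive `2N`-th root of unity, `S` is the kernel of the `ℤ`-linear
map `n ↦ ∑ n_p ζ^p`. Its image is `ℤ[ζ]`, free on `1, ζ, …, ζ^(d-1)` where `d = φ(2N) ≤ N` is the
degree of the minimal polynomial `Φ_{2N}` of `ζ`; rank–nullity gives rank `N - φ(2N)`.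
-/

open Polynomial Submodule

theorem Nat.totient_two_mul_le (n : ℕ) : (2 * n).totient ≤ n := by
  induction n using Nat.strong_induction_on with
  | _ n ih =>
    rcases Nat.even_or_odd n with ⟨m, rfl⟩ | hodd
    · rcases m.eq_zero_or_pos with rfl | hm
      · simp
      rw [Nat.totient_two_mul_of_even ⟨m, rfl⟩, ← two_mul]
      have := ih m (by omega)
      omega
    · rw [Nat.totient_two_mul_of_odd hodd]
      exact Nat.totient_le n

theorem Submodule.span_range_pow_eq_adjoin {R A : Type*} [CommRing R] [Semiring A] [Algebra R A]
    {x : A} {f : R[X]} (hf : f.Monic) (hfx : aeval x f = 0) {n : ℕ} (hn : f.natDegree ≤ n) :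
    span R (Set.range fun p : Fin n => x ^ (p : ℕ)) =
      Subalgebra.toSubmodule (Algebra.adjoin R {x}) := by
  refine le_antisymm (span_le.mpr ?_) ?_
  · rintro _ ⟨p, rfl⟩
    exact pow_mem (Algebra.self_mem_adjoin_singleton R x) _
  · rw [← span_range_natDegree_eq_adjoin hf hfx]
    apply span_mono
    intro y hy
    simp only [Finset.coe_image, Finset.coe_range, Set.mem_image, Set.mem_Iio] at hy
    obtain ⟨k, hk, rfl⟩ := hy
    exact ⟨⟨k, hk.trans_le hn⟩, rfl⟩

section CharZero

variable {K : Type*} [Field K] [CharZero K] {x : K}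

theorem linearIndependent_pow_natDegree_minpoly_int (hx : IsIntegral ℤ x) :
    LinearIndependent ℤ fun i : Fin (minpoly ℤ x).natDegree => x ^ (i : ℕ) := by
  -- Gauss's lemma: the minimal polynomial over `ℚ` is the one over `ℤ`.
  have hdeg : (minpoly ℚ x).natDegree = (minpoly ℤ x).natDegree := by
    rw [minpoly.isIntegrallyClosed_eq_field_fractions' ℚ hx, (minpoly.monic hx).natDegree_map]
  rw [← hdeg]
  exact (linearIndependent_pow x).restrict_scalars' ℤ

theorem finrank_span_range_pow_eq_natDegree_minpoly_int (hx : IsIntegral ℤ x) {n : ℕ}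
    (hn : (minpoly ℤ x).natDegree ≤ n) :
    Module.finrank ℤ (span ℤ (Set.range fun p : Fin n => x ^ (p : ℕ))) =
      (minpoly ℤ x).natDegree := by
  rw [span_range_pow_eq_adjoin (minpoly.monic hx) (minpoly.aeval ℤ x) hn,
    ← span_range_pow_eq_adjoin (minpoly.monic hx) (minpoly.aeval ℤ x) le_rfl,
    finrank_span_eq_card (linearIndependent_pow_natDegree_minpoly_int hx), Fintype.card_fin]

theorem finrank_ker_linearCombination_pow (hx : IsIntegral ℤ x) {n : ℕ}
    (hn : (minpoly ℤ x).natDegree ≤ n) :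
    Module.finrank ℤ (LinearMap.ker (Fintype.linearCombination ℤ fun p : Fin n => x ^ (p : ℕ))) =
      n - (minpoly ℤ x).natDegree := by
  set f := Fintype.linearCombination ℤ fun p : Fin n => x ^ (p : ℕ)
  have hrn := (LinearMap.ker f).finrank_quotient_add_finrank
  rw [f.quotKerEquivRange.finrank_eq, Fintype.range_linearCombination,
    finrank_span_range_pow_eq_natDegree_minpoly_int hx hn, Module.finrank_fin_fun] at hrn
  omega

end CharZero

theorem Complex.isPrimitiveRoot_exp_neg_pi_mul_I_div {N : ℕ} (hN : N ≠ 0) :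
    IsPrimitiveRoot (Complex.exp (-((Real.pi : ℂ) * Complex.I) / N)) (2 * N) := by
  have h := (Complex.isPrimitiveRoot_exp (2 * N) (by omega)).inv
  rwa [← Complex.exp_neg, show -(2 * Real.pi * Complex.I / ((2 * N : ℕ) : ℂ)) =
    -((Real.pi : ℂ) * Complex.I) / N by push_cast; field_simp] at h

theorem negacyclic_kernel_free_rank (N : ℕ) (hN : 1 ≤ N) :
    ∃ S : Submodule ℤ (Fin N → ℤ),
      (S : Set (Fin N → ℤ)) =
        {n : Fin N → ℤ | ∑ p : Fin N, (n p : ℂ) *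
          Complex.exp (-((Real.pi : ℂ) * Complex.I * ((p : ℕ) : ℂ)) / (N : ℂ)) = 0} ∧
      Module.Free ℤ S ∧ Module.finrank ℤ S = N - Nat.totient (2 * N) := by
  set ζ := Complex.exp (-((Real.pi : ℂ) * Complex.I) / N)
  have hζ : IsPrimitiveRoot ζ (2 * N) := Complex.isPrimitiveRoot_exp_neg_pi_mul_I_div (by omega)
  have hdeg : (minpoly ℤ ζ).natDegree = (2 * N).totient := by
    rw [← cyclotomic_eq_minpoly hζ (by omega), natDegree_cyclotomic]
  have hpow (p : ℕ) : Complex.exp (-((Real.pi : ℂ) * Complex.I * p) / N) = ζ ^ p := by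
    rw [← Complex.exp_nat_mul]
    ring_nf
  refine ⟨LinearMap.ker (Fintype.linearCombination ℤ fun p : Fin N => ζ ^ (p : ℕ)), ?_,
    inferInstance, ?_⟩
  · ext n
    simp [Fintype.linearCombination_apply, hpow]
  · rw [finrank_ker_linearCombination_pow (hζ.isIntegral (by omega))
      (hdeg ▸ N.totient_two_mul_le), hdeg]
end

section
/- Let N be an odd prime and let q be an integer such that N does not divide 2q+1. Then for every n ∈ ℤ^N: Σ_{p=0}^{N-1} n_p · exp(-iπ (2q+1) p / N) = 0 if and only if n_p = (-1)^p · n_0 for all 0 ≤ p ≤ N-1 (i.e. n_0 = -n_1 = n_2 = -n_3 = … = n_{N-1}). -/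
open Polynomial Complex Real

/-!
Write `2q + 1 = N - 2j`. Then `exp(-iπ(2q+1)p/N) = (-1)^p ξ^p` with `ξ = exp(2πij/N)`, a primitive
`N`-th root of unity because `N ∤ j`. The equation thus says that `f = Σ (-1)^p n_p X^p` vanishes at
`ξ`, i.e. that the minimal polynomial `Φ_N = 1 + X + ⋯ + X^(N-1)` of `ξ` over `ℚ` divides `f`.
As `deg f < N = deg Φ_N + 1`, this happens iff `f` is a constant multiple of `Φ_N`, i.e. iff all
coefficients `(-1)^p n_p` are equal.
-/

theorem neg_one_pow_mul_eq_iff_eq_neg_one_pow_mul {R : Type*} [Monoid R] [HasDistribNeg R]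
    (k : ℕ) (a b : R) : (-1) ^ k * a = b ↔ a = (-1) ^ k * b := by
  have h : ((-1 : R) ^ k) * (-1) ^ k = 1 := by
    rw [← pow_add, ← two_mul, pow_mul, neg_one_sq, one_pow]
  constructor <;> rintro rfl <;> rw [← mul_assoc, h, one_mul]

theorem Polynomial.coeff_eq_coeff_zero_of_cyclotomic_dvd {K : Type*} [Field K] {N : ℕ}
    [Fact N.Prime] {f : K[X]} (hdvd : cyclotomic N K ∣ f) (hdeg : f.natDegree < N) {i : ℕ}
    (hi : i < N) : f.coeff i = f.coeff 0 := by
  obtain ⟨g, rfl⟩ := hdvd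
  rcases eq_or_ne g 0 with rfl | hg
  · simp
  have hΦ : (cyclotomic N K).natDegree = N - 1 := by
    rw [natDegree_cyclotomic, Nat.totient_prime Fact.out]
  rw [natDegree_mul (cyclotomic_ne_zero N K) hg, hΦ] at hdeg
  obtain ⟨c, rfl⟩ := natDegree_eq_zero.mp (by omega : g.natDegree = 0)
  have hcoeff : ∀ i < N, (cyclotomic N K).coeff i = 1 := fun i hi => by
    simp [cyclotomic_prime, coeff_X_pow, hi]
  rw [coeff_mul_C, coeff_mul_C, hcoeff i hi, hcoeff 0 (Fact.out : N.Prime).pos]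

theorem Polynomial.aeval_ofFn {R A : Type*} [CommSemiring R] [DecidableEq R] [Semiring A]
    [Algebra R A] (x : A) {N : ℕ} (a : Fin N → R) :
    aeval x (ofFn N a) = ∑ p : Fin N, algebraMap R A (a p) * x ^ (p : ℕ) := by
  simp [ofFn_eq_sum_monomial, aeval_monomial]

theorem IsPrimitiveRoot.sum_mul_pow_eq_zero_iff {K : Type*} [Field K] [CharZero K] {N : ℕ}
    (hN : N.Prime) {ξ : K} (hξ : IsPrimitiveRoot ξ N) (a : Fin N → ℚ) :
    ∑ p : Fin N, (a p : K) * ξ ^ (p : ℕ) = 0 ↔ ∀ p, a p = a ⟨0, hN.pos⟩ := by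
  have := Fact.mk hN
  constructor
  · intro h p
    have hdvd : cyclotomic N ℚ ∣ ofFn N a := by
      rw [cyclotomic_eq_minpoly_rat hξ hN.pos]
      exact minpoly.dvd ℚ ξ (by simpa [aeval_ofFn] using h)
    have := coeff_eq_coeff_zero_of_cyclotomic_dvd hdvd (ofFn_natDegree_lt hN.one_le a) p.isLt
    rwa [ofFn_coeff_eq_val_of_lt _ p.isLt, ofFn_coeff_eq_val_of_lt _ hN.pos] at this
  · intro h
    simp_rw [h, ← Finset.mul_sum, Fin.sum_univ_eq_sum_range (ξ ^ ·), hξ.geom_sum_eq_zero hN.one_lt,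
      mul_zero]

theorem Complex.exp_neg_pi_mul_I_mul_div_eq {N : ℕ} {c j : ℤ} (hN : N ≠ 0) (hc : c = N - 2 * j)
    (p : ℕ) :
    exp (-(π * I * c * p) / N) = (-1) ^ p * exp (2 * π * I * (j / N)) ^ p := by
  have hN' : (N : ℂ) ≠ 0 := by exact_mod_cast hN
  have : -(π * I * c * p) / N = p * (-(π * I)) + p * (2 * π * I * (j / N)) := by
    rw [hc]; push_cast; field_simp; ring
  rw [this, exp_add, exp_nat_mul, exp_nat_mul, exp_neg, exp_pi_mul_I, inv_neg, inv_one]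

theorem negacyclic_odd_prime_kernel (N : ℕ) (hN : N.Prime) (hNodd : Odd N)
    (q : ℤ) (hq : ¬ ((N : ℤ) ∣ (2 * q + 1)))
    (n : Fin N → ℤ) :
    (∑ p : Fin N, (n p : ℂ) *
        Complex.exp (-((Real.pi : ℂ) * Complex.I * ((2 * q + 1 : ℤ) : ℂ) * ((p : ℕ) : ℂ)) / (N : ℂ))
        = 0)
      ↔ ∀ p : Fin N, n p = (-1 : ℤ) ^ (p : ℕ) * n ⟨0, hN.pos⟩ := by
  obtain ⟨k, hk⟩ := hNodd
  obtain ⟨j, hc⟩ : ∃ j : ℤ, 2 * q + 1 = N - 2 * j := ⟨k - q, by omega⟩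
  have hj : ¬ (N : ℤ) ∣ j := fun h => hq (hc ▸ dvd_sub dvd_rfl (h.mul_left 2))
  have hξ : IsPrimitiveRoot (exp (2 * π * I * (j / N))) N :=
    isPrimitiveRoot_exp_of_isCoprime j N hN.ne_zero
      ((Nat.prime_iff_prime_int.mp hN).coprime_iff_not_dvd.mpr hj).symm
  simp_rw [exp_neg_pi_mul_I_mul_div_eq hN.ne_zero hc]
  have hsum := hξ.sum_mul_pow_eq_zero_iff hN (fun p => (((-1) ^ (p : ℕ) * n p : ℤ) : ℚ))
  simp only [Rat.cast_intCast, Int.cast_inj, pow_zero, one_mul,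
    neg_one_pow_mul_eq_iff_eq_neg_one_pow_mul] at hsum
  rw [← hsum]
  congr! 2 with p
  push_cast
  ring
end

section
/- Let N ≥ 1 and let q be an integer with gcd(2N, 2q+1) = 1, and assume N is not a power of 2. Let p be an odd prime dividing N. If n ∈ ℤ^N satisfies n_j = (-1)^{⌊ j·p / N ⌋} · n_{j mod (N/p)} for all 0 ≤ j ≤ N-1, then Σ_{j=0}^{N-1} n_j · exp(-iπ (2q+1) j / N) = 0. -/
/-!
Write `N = p M` and `j = b + M a` with `a < p`, `b < M`. The symmetry reads
`n (b + M a) = (-1)^a n b`, so with `ζ = exp(-iπ(2q+1)/N)` the sum factors as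
`(∑_{a<p} (-ζ^M)^a) * ∑_{b<M} n b ζ^b`. As `2q+1` is odd and prime to `p`, the number
`-ζ^M = exp(2πi ((p - 2q - 1)/2) / p)` is a primitive `p`-th root of unity, so the first factor
vanishes.
-/

open Complex Finset
open scoped Real

theorem Fin.sum_mul_pow_eq_geom_sum_mul {R : Type*} [CommSemiring R] {p M : ℕ}
    (v : Fin (p * M) → R) (w : Fin M → R) (s x : R)
    (hv : ∀ a : Fin p, ∀ b : Fin M, v (finProdFinEquiv (a, b)) = s ^ (a : ℕ) * w b) :
    ∑ j, v j * x ^ (j : ℕ) = (∑ a ∈ range p, (s * x ^ M) ^ a) * ∑ b, w b * x ^ (b : ℕ) := by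
  rw [← Equiv.sum_comp finProdFinEquiv, Fintype.sum_prod_type, ← Fin.sum_univ_eq_sum_range,
    sum_mul_sum]
  refine sum_congr rfl fun a _ => sum_congr rfl fun b _ => ?_
  rw [hv, finProdFinEquiv_apply_val, pow_add, pow_mul, mul_pow]
  ring

theorem finProdFinEquiv_val_mul_div {p M : ℕ} (a : Fin p) (b : Fin M) :
    (finProdFinEquiv (a, b) : ℕ) * p / (p * M) = a := by
  have hpM : 0 < p * M := Nat.mul_pos a.pos b.pos
  have hbp : (b : ℕ) * p < p * M := by
    rw [mul_comm p]
    exact Nat.mul_lt_mul_of_pos_right b.isLt a.pos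
  rw [finProdFinEquiv_apply_val, add_mul, mul_comm M, mul_assoc, mul_comm M,
    Nat.add_mul_div_right _ _ hpM, Nat.div_eq_of_lt hbp, zero_add]

theorem finProdFinEquiv_val_mod_div {p M : ℕ} (a : Fin p) (b : Fin M) :
    (finProdFinEquiv (a, b) : ℕ) % (p * M / p) = b := by
  rw [Nat.mul_div_cancel_left M a.pos, finProdFinEquiv_apply_val, Nat.add_mul_mod_self_left,
    Nat.mod_eq_of_lt b.isLt]

theorem isPrimitiveRoot_neg_exp_neg_pi_mul_I {p : ℕ} (hp : Odd p) {c : ℤ} (hc : Odd c)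
    (hcp : IsCoprime c p) : IsPrimitiveRoot (-exp (-(π * I * c) / p)) p := by
  obtain ⟨r, hr⟩ := hp
  obtain ⟨s, rfl⟩ := hc
  have hk : IsCoprime ((r : ℤ) - s) p := by
    have h2 : 2 * ((r : ℤ) - s) = -(2 * s + 1) + p * 1 := by rw [hr]; push_cast; ring
    exact IsCoprime.of_mul_left_right (h2 ▸ hcp.neg_left.add_mul_left_left 1)
  convert isPrimitiveRoot_exp_of_isCoprime _ p (by omega) hk using 1
  have hp0 : (p : ℂ) ≠ 0 := by norm_cast; omega
  rw [← mul_neg_one, ← exp_pi_mul_I, ← exp_add]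
  congr 1
  rw [hr] at hp0 ⊢
  push_cast at hp0 ⊢
  field_simp
  ring

theorem negacyclic_coprime_prime_factor_solution_general (N : ℕ) (hN : 1 ≤ N)
    (q : ℤ) (hq : Int.gcd (2 * (N : ℤ)) (2 * q + 1) = 1)
    (p : ℕ) (hp : p.Prime) (hpodd : Odd p) (hpd : p ∣ N)
    (n : Fin N → ℤ)
    (hn : ∀ j : Fin N, n j = (-1 : ℤ) ^ ((j : ℕ) * p / N) *
      n ⟨(j : ℕ) % (N / p), lt_of_le_of_lt (Nat.mod_le _ _) j.isLt⟩) :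
    ∑ j : Fin N, (n j : ℂ) *
      Complex.exp (-((Real.pi : ℂ) * Complex.I * ((2 * q + 1 : ℤ) : ℂ) * ((j : ℕ) : ℂ)) / (N : ℂ))
      = 0 := by
  obtain ⟨M, rfl⟩ := hpd
  have hM : (M : ℂ) ≠ 0 := Nat.cast_ne_zero.mpr (by rintro rfl; simp at hN)
  have hcop : IsCoprime (2 * q + 1) p := by
    rw [← Int.isCoprime_iff_gcd_eq_one, Nat.cast_mul] at hq
    exact hq.symm.of_mul_right_right.of_mul_right_left
  set ζ := exp (-(π * I * (2 * q + 1 : ℤ)) / (p * M : ℕ))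
  have hζM : -1 * ζ ^ M = -exp (-(π * I * (2 * q + 1 : ℤ)) / p) := by
    rw [← exp_nat_mul]
    push_cast
    field_simp
  have hblock : ∀ a : Fin p, ∀ b : Fin M, (n (finProdFinEquiv (a, b)) : ℂ)
      = (-1) ^ (a : ℕ) * n ⟨b, b.isLt.trans_le (Nat.le_mul_of_pos_left M hp.pos)⟩ := by
    intro a b
    rw [hn, finProdFinEquiv_val_mul_div]
    push_cast
    congr 3
    exact Fin.ext (finProdFinEquiv_val_mod_div a b)
  calc _ = ∑ j : Fin (p * M), (n j : ℂ) * ζ ^ (j : ℕ) := by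
        refine sum_congr rfl fun j _ => ?_
        rw [← exp_nat_mul]
        ring_nf
    _ = 0 := by
        rw [Fin.sum_mul_pow_eq_geom_sum_mul _ _ _ _ hblock, hζM,
          (isPrimitiveRoot_neg_exp_neg_pi_mul_I hpodd (odd_two_mul_add_one q) hcop).geom_sum_eq_zero
            hp.one_lt, zero_mul]

theorem negacyclic_coprime_prime_factor_solution (N : ℕ) (hN : 1 ≤ N)
    (q : ℤ) (hq : Int.gcd (2 * (N : ℤ)) (2 * q + 1) = 1)
    (hNotPow : ¬ ∃ m : ℕ, N = 2 ^ m)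
    (p : ℕ) (hp : p.Prime) (hpodd : Odd p) (hpd : p ∣ N)
    (n : Fin N → ℤ)
    (hn : ∀ j : Fin N, n j = (-1 : ℤ) ^ ((j : ℕ) * p / N) *
      n ⟨(j : ℕ) % (N / p), lt_of_le_of_lt (Nat.mod_le _ _) j.isLt⟩) :
    ∑ j : Fin N, (n j : ℂ) *
      Complex.exp (-((Real.pi : ℂ) * Complex.I * ((2 * q + 1 : ℤ) : ℂ) * ((j : ℕ) : ℂ)) / (N : ℂ))
      = 0 :=
  negacyclic_coprime_prime_factor_solution_general N hN q hq p hp hpodd hpd n hn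
end

section
/- Let N ≥ 1 and let q be an integer; set L = gcd(2N, 2q+1), Ñ = 2N/L and q̃ = (2q+1)/L. Then for every n ∈ ℂ^N: Σ_{p=0}^{N-1} n_p · exp(-iπ (2q+1) p / N) = Σ_{l=0}^{Ñ-1} y_l · exp(-2πi q̃ l / Ñ), where y_l = Σ_{0 ≤ k < N, k ≡ l (mod Ñ)} n_k. -/
open Finset

theorem pad_of_lt {N : ℕ} {α : Type*} [Zero α] (n : Fin N → α) {k : ℕ} (hk : k < N) :
    pad n k = n ⟨k, hk⟩ :=
  dif_pos hk

theorem sum_range_mul_mod_eq_sum_fold {R : Type*} [NonUnitalNonAssocSemiring R]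
    (f g : ℕ → R) (N : ℕ) {K : ℕ} (hK : 0 < K) :
    ∑ k ∈ range N, f k * g (k % K)
      = ∑ l ∈ range K, (∑ k ∈ range N, if k % K = l then f k else 0) * g l := by
  simp only [sum_mul, ite_mul, zero_mul]
  rw [sum_comm]
  refine sum_congr rfl fun k _ => ?_
  rw [sum_ite_eq, if_pos (mem_range.mpr (Nat.mod_lt k hK))]

theorem mul_div_gcd_comm (m : ℕ) (a : ℤ) :
    a * ((m / Int.gcd m a : ℕ) : ℤ) = m * (a / Int.gcd m a) := by
  have hm : ((Int.gcd m a : ℕ) : ℤ) ∣ m := Int.gcd_dvd_left _ _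
  rw [Int.natCast_div, ← Int.mul_ediv_assoc a hm,
    mul_comm, Int.mul_ediv_assoc _ (Int.gcd_dvd_right _ _)]

theorem neg_pi_I_mul_div_eq_of_mul_eq {a b : ℤ} {M K : ℕ} (hM : M ≠ 0) (hK : K ≠ 0)
    (h : a * K = 2 * M * b) (z : ℂ) :
    -(Real.pi * Complex.I * a * z) / M = -(2 * Real.pi * Complex.I * b * z) / K := by
  have hc : (a : ℂ) * K = 2 * M * b := by exact_mod_cast h
  rw [div_eq_div_iff (Nat.cast_ne_zero.mpr hM) (Nat.cast_ne_zero.mpr hK)]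
  linear_combination (-(Real.pi : ℂ) * Complex.I * z) * hc

theorem exp_neg_two_pi_I_mul_div_natCast_mod (b : ℤ) (K p : ℕ) :
    Complex.exp (-(2 * Real.pi * Complex.I * b * p) / K)
      = Complex.exp (-(2 * Real.pi * Complex.I * b * (p % K : ℕ)) / K) := by
  rcases eq_or_ne K 0 with rfl | hK
  · simp
  refine Complex.exp_eq_exp_iff_exists_int.mpr ⟨-b * (p / K : ℕ), ?_⟩
  have hp : (p : ℂ) = K * (p / K : ℕ) + (p % K : ℕ) := by
    exact_mod_cast (Nat.div_add_mod p K).symm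
  rw [hp]
  simp only [Int.cast_mul, Int.cast_neg, Int.cast_natCast]
  field_simp
  ring

theorem negacyclic_fold_sum (N : ℕ) (hN : 1 ≤ N) (q : ℤ)
    (L : ℕ) (hL : L = Int.gcd (2 * (N : ℤ)) (2 * q + 1))
    (Ntil : ℕ) (hNtil : Ntil = 2 * N / L)
    (qtil : ℤ) (hqtil : qtil = (2 * q + 1) / (L : ℤ))
    (n : Fin N → ℂ)
    (y : ℕ → ℂ) (hy : ∀ l, y l = ∑ k ∈ Finset.range N, if k % Ntil = l then pad n k else 0) :
    ∑ p : Fin N, n p *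
        Complex.exp (-((Real.pi : ℂ) * Complex.I * ((2 * q + 1 : ℤ) : ℂ) * ((p : ℕ) : ℂ)) / (N : ℂ))
      = ∑ l ∈ Finset.range Ntil, y l *
        Complex.exp (-(2 * (Real.pi : ℂ) * Complex.I * (qtil : ℂ) * (l : ℂ)) / (Ntil : ℂ)) := by
  have hLpos : 0 < L := hL ▸ Int.gcd_pos_of_ne_zero_right _ (by omega)
  have hL2N : L ∣ 2 * N := Int.natCast_dvd_natCast.mp (hL ▸ Int.gcd_dvd_left _ _)
  have hNtil_pos : 0 < Ntil := hNtil ▸ Nat.div_pos (Nat.le_of_dvd (by omega) hL2N) hLpos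
  have hphase : (2 * q + 1) * (Ntil : ℤ) = 2 * N * qtil := by
    subst hL hNtil hqtil
    exact_mod_cast mul_div_gcd_comm (2 * N) (2 * q + 1)
  calc _ = ∑ k ∈ range N, pad n k *
          Complex.exp (-(2 * Real.pi * Complex.I * qtil * (k % Ntil : ℕ)) / Ntil) := by
        rw [← Fin.sum_univ_eq_sum_range]
        refine sum_congr rfl fun p _ => ?_
        rw [pad_of_lt n p.isLt, neg_pi_I_mul_div_eq_of_mul_eq (by omega) hNtil_pos.ne' hphase,
          exp_neg_two_pi_I_mul_div_natCast_mod]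
    _ = _ := by
        rw [sum_range_mul_mod_eq_sum_fold (pad n)
          (fun l : ℕ => Complex.exp (-(2 * Real.pi * Complex.I * qtil * l) / Ntil)) N hNtil_pos]
        simp only [hy]
end

section
/- Let N ≥ 1 and let q be an integer with L = gcd(2N, 2q+1) > 1, and assume N = 2^m · L for some integer m ≥ 1. Set Ñ = 2N/L. Let n ∈ ℤ^N and define the folded coefficients y_l = Σ_{0 ≤ k < N, k ≡ l (mod Ñ)} n_k for 0 ≤ l < Ñ. If y_l = y_{l mod (Ñ/2)} for all 0 ≤ l < Ñ, then Σ_{j=0}^{N-1} n_j · exp(-iπ (2q+1) j / N) = 0. -/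
/-! The sum is a polynomial in `ζ = exp(-iπ(2q+1)/N)`. Writing `2q+1 = L q̃` with `q̃` odd gives
`ζ ^ (Ñ/2) = exp(-iπ q̃) = -1`, so `ζ` is a root of unity of order dividing `Ñ`: folding the
coefficients modulo `Ñ` leaves `∑_{l<Ñ} y_l ζ^l`, whose two halves cancel since `y_{l+Ñ/2} = y_l`
and `ζ^{l+Ñ/2} = -ζ^l`. -/

open Finset

theorem sum_range_mul_pow_eq_sum_fold {R : Type*} [CommSemiring R] {ζ : R} {P : ℕ}
    (hP : 0 < P) (hζ : ζ ^ P = 1) (f : ℕ → R) (N : ℕ) :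
    ∑ k ∈ range N, f k * ζ ^ k =
      ∑ l ∈ range P, (∑ k ∈ range N, if k % P = l then f k else 0) * ζ ^ l := by
  rw [← sum_fiberwise_of_maps_to (g := (· % P)) (t := range P)
    fun k _ => mem_range.mpr (Nat.mod_lt k hP)]
  refine sum_congr rfl fun l _ => ?_
  rw [← sum_filter, sum_mul]
  refine sum_congr rfl fun k hk => ?_
  rw [pow_eq_pow_mod k hζ, (mem_filter.mp hk).2]

theorem sum_range_two_mul_mul_pow_eq_zero {R : Type*} [CommRing R] {ζ : R} {M : ℕ}
    (hζ : ζ ^ M = -1) (g : ℕ → R) (hg : ∀ l < M, g (M + l) = g l) :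
    ∑ l ∈ range (2 * M), g l * ζ ^ l = 0 := by
  rw [two_mul, sum_range_add, ← sum_add_distrib]
  refine sum_eq_zero fun l hl => ?_
  rw [hg l (mem_range.mp hl), pow_add, hζ]
  ring

theorem Complex.exp_neg_pi_mul_I_mul_div_pow_eq_neg_one {a b : ℤ} {M N : ℕ} (hN : N ≠ 0)
    (hb : Odd b) (hab : a * M = b * N) :
    exp (-(Real.pi * I * a) / N) ^ M = -1 := by
  have hexp : (M : ℂ) * (-(Real.pi * I * a) / N) = ((-b : ℤ) : ℂ) * (Real.pi * I) := by
    have hab' : (a : ℂ) * M = b * N := by exact_mod_cast hab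
    field_simp
    push_cast
    linear_combination -hab'
  rw [← exp_nat_mul, hexp, exp_int_mul, exp_pi_mul_I, hb.neg.neg_one_zpow]

theorem negacyclic_case_three_solution_general (N : ℕ) (hN : 1 ≤ N) (q : ℤ)
    (L : ℕ) (hL : L = Int.gcd (2 * (N : ℤ)) (2 * q + 1)) (hL1 : 1 < L)
    (m : ℕ) (hNm : N = 2 ^ m * L)
    (Ntil : ℕ) (hNtil : Ntil = 2 * N / L)
    (n : Fin N → ℤ)
    (y : ℕ → ℤ) (hy : ∀ l, y l = ∑ k ∈ Finset.range N, if k % Ntil = l then pad n k else 0)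
    (h : ∀ l < Ntil, y l = y (l % (Ntil / 2))) :
    ∑ j : Fin N, (n j : ℂ) *
      Complex.exp (-((Real.pi : ℂ) * Complex.I * ((2 * q + 1 : ℤ) : ℂ) * ((j : ℕ) : ℂ)) / (N : ℂ))
      = 0 := by
  have hNtil2 : Ntil = 2 * 2 ^ m := by
    rw [hNtil, hNm, ← mul_assoc, Nat.mul_div_cancel _ (by omega)]
  obtain ⟨qt, hqt⟩ : (L : ℤ) ∣ 2 * q + 1 := hL ▸ Int.gcd_dvd_right _ _
  have hqt_odd : Odd qt := (Int.odd_mul.mp (hqt ▸ odd_two_mul_add_one q)).2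
  set ζ := Complex.exp (-(Real.pi * Complex.I * ((2 * q + 1 : ℤ) : ℂ)) / N)
  have hζhalf : ζ ^ 2 ^ m = -1 :=
    Complex.exp_neg_pi_mul_I_mul_div_pow_eq_neg_one (by omega) hqt_odd
      (by rw [hqt, hNm]; push_cast; ring)
  have hζ : ζ ^ Ntil = 1 := by rw [hNtil2, pow_mul', hζhalf]; norm_num
  have hpow (k : ℕ) : Complex.exp (-(Real.pi * Complex.I * ((2 * q + 1 : ℤ) : ℂ) * k) / N)
      = ζ ^ k := by
    rw [← Complex.exp_nat_mul]; ring_nf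
  calc ∑ j : Fin N, (n j : ℂ) *
        Complex.exp (-(Real.pi * Complex.I * ((2 * q + 1 : ℤ) : ℂ) * ((j : ℕ) : ℂ)) / N)
      = ∑ k ∈ range N, ((pad n k : ℤ) : ℂ) * ζ ^ k := by
        simp only [hpow]
        rw [← Fin.sum_univ_eq_sum_range]
        simp [pad]
    _ = ∑ l ∈ range Ntil, ((y l : ℤ) : ℂ) * ζ ^ l := by
        rw [sum_range_mul_pow_eq_sum_fold (by rw [hNtil2]; positivity) hζ]
        simp only [hy]
        push_cast
        rfl
    _ = 0 := by
        rw [hNtil2]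
        refine sum_range_two_mul_mul_pow_eq_zero hζhalf _ fun l hl => ?_
        rw [h (2 ^ m + l) (by omega), hNtil2, Nat.mul_div_cancel_left _ two_pos,
          Nat.add_mod_left, Nat.mod_eq_of_lt hl]

theorem negacyclic_case_three_solution (N : ℕ) (hN : 1 ≤ N) (q : ℤ)
    (L : ℕ) (hL : L = Int.gcd (2 * (N : ℤ)) (2 * q + 1)) (hL1 : 1 < L)
    (m : ℕ) (hm : 1 ≤ m) (hNm : N = 2 ^ m * L)
    (Ntil : ℕ) (hNtil : Ntil = 2 * N / L)
    (n : Fin N → ℤ)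
    (y : ℕ → ℤ) (hy : ∀ l, y l = ∑ k ∈ Finset.range N, if k % Ntil = l then pad n k else 0)
    (h : ∀ l < Ntil, y l = y (l % (Ntil / 2))) :
    ∑ j : Fin N, (n j : ℂ) *
      Complex.exp (-((Real.pi : ℂ) * Complex.I * ((2 * q + 1 : ℤ) : ℂ) * ((j : ℕ) : ℂ)) / (N : ℂ))
      = 0 :=
  negacyclic_case_three_solution_general N hN q L hL hL1 m hNm Ntil hNtil n y hy h
end
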